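/- For the SCAD penalty with parameter $a > 2$ and threshold $\lambda > 0$, the thresholding function $h_\lambda(x) = \arg\min_u \{\frac{1}{2}(u-x)^2 + p_\lambda(u)\}$ evaluated at $x \geq 0$ satisfies: $h_\lambda(x) = \max(x - \lambda, 0)$ when $x \leq 2\lambda$; $h_\lambda(x) = \frac{(a-1)x - a\lambda}{a-2}$ when $2\lambda < x < a\lambda$; and $h_\lambda(x) = x$ when $x \geq a\lambda$. -/
import Mathlib


/-- The SCAD penalty with parameter `a > 2` and threshold `l > 0`. -/
noncomputable def scadPenalty (a l t : ℝ) : ℝ :=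
  if |t| ≤ l then l * |t|
  else if |t| ≤ a * l then (2 * a * l * |t| - t ^ 2 - l ^ 2) / (2 * (a - 1))
  else (a + 1) * l ^ 2 / 2

private lemma scad_sq_pos {r : ℝ} (h : r ≠ 0) : 0 < r ^ 2 :=
  lt_of_le_of_ne (sq_nonneg r) (Ne.symm (pow_ne_zero 2 h))

private lemma scad_eval_nonneg (a l u : ℝ) (hu : 0 ≤ u) :
    scadPenalty a l u =
      if u ≤ l then l * u
      else if u ≤ a * l then (2 * a * l * u - u ^ 2 - l ^ 2) / (2 * (a - 1))
      else (a + 1) * l ^ 2 / 2 := by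
  simp [scadPenalty, abs_of_nonneg hu]

set_option maxHeartbeats 1000000 in
/-- Strict minimality against nonnegative competitors. -/
private lemma scad_key (a l x : ℝ) (ha : 2 < a) (hl : 0 < l) (hx : 0 ≤ x)
    (v : ℝ)
    (hv : (x ≤ 2 * l → v = max (x - l) 0) ∧
          (2 * l < x → x < a * l → v = ((a - 1) * x - a * l) / (a - 2)) ∧
          (a * l ≤ x → v = x)) :
    ∀ u : ℝ, 0 ≤ u → u ≠ v →
      (1 / 2) * (v - x) ^ 2 + scadPenalty a l v
        < (1 / 2) * (u - x) ^ 2 + scadPenalty a l u := by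
  have ha1 : (0:ℝ) < a - 1 := by linarith
  have ha2 : (0:ℝ) < a - 2 := by linarith
  have hden : (0:ℝ) < 2 * (a - 1) := by linarith
  have hden' : (2:ℝ) * (a - 1) ≠ 0 := ne_of_gt hden
  intro u hu hne
  rw [scad_eval_nonneg a l u hu]
  rcases le_or_gt x (2 * l) with hx2 | hx2
  · -- x ≤ 2l
    have hveq : v = max (x - l) 0 := hv.1 hx2
    rcases le_or_gt x l with hx1 | hx1
    · -- x ≤ l : v = 0
      have hv0 : v = 0 := by rw [hveq, max_eq_right (by linarith)]
      subst hv0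
      have hu0 : 0 < u := lt_of_le_of_ne hu (Ne.symm hne)
      have hP0 : scadPenalty a l 0 = 0 := by simp [scadPenalty, hl.le]
      rw [hP0]
      split_ifs with h1 h2
      · nlinarith [mul_pos hu0 hu0, mul_nonneg hu0.le (sub_nonneg.mpr hx1)]
      · push_neg at h1
        rw [← sub_pos]
        have hkey : 1/2*(u-x)^2 + (2*a*l*u - u^2 - l^2)/(2*(a-1)) - (1/2*(0-x)^2 + 0)
            = ((a-1)*(u-x)^2 + 2*a*l*u - u^2 - l^2 - (a-1)*x^2) / (2*(a-1)) := by
          field_simp; ring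
        rw [hkey]
        apply div_pos _ hden
        nlinarith [mul_nonneg (mul_nonneg ha1.le (sub_nonneg.mpr hx1)) hu,
          mul_pos hl (sub_pos.mpr h1), mul_nonneg ha2.le (sq_nonneg u)]
      · push_neg at h1 h2
        have hupos : 0 < u := hu0
        nlinarith [mul_pos hupos (show (0:ℝ) < u - 2*x by nlinarith [mul_pos ha2 hl]),
          mul_pos (mul_pos (by linarith : (0:ℝ) < a+1) hl) hl]
    · -- l < x ≤ 2l : v = x - l
      have hvxl : v = x - l := by rw [hveq, max_eq_left (by linarith)]
      subst hvxl
      have hPv : scadPenalty a l (x - l) = l * (x - l) := by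
        rw [scad_eval_nonneg a l (x - l) (by linarith), if_pos (by linarith)]
      rw [hPv]
      split_ifs with h1 h2
      · -- u ≤ l : diff = ½(u-(x-l))²
        have h3 : (0:ℝ) < (u - (x - l))^2 := scad_sq_pos (sub_ne_zero.mpr hne)
        nlinarith
      · -- l < u ≤ al
        push_neg at h1
        rw [← sub_pos]
        have hkey : 1/2*(u-x)^2 + (2*a*l*u - u^2 - l^2)/(2*(a-1)) - (1/2*(x-l-x)^2 + l*(x-l))
            = ((a-1)*(u-x)^2 + 2*a*l*u - u^2 - l^2 - (a-1)*l^2 - 2*(a-1)*l*(x-l)) / (2*(a-1)) := by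
          field_simp; ring
        rw [hkey]
        apply div_pos _ hden
        nlinarith [mul_pos ha2 (mul_pos (sub_pos.mpr h1) (sub_pos.mpr h1)),
          mul_nonneg (mul_nonneg ha1.le (sub_nonneg.mpr hx2)) (sub_pos.mpr h1).le,
          mul_nonneg ha1.le (sq_nonneg (x - 2*l))]
      · -- u > al
        push_neg at h1 h2
        nlinarith [mul_pos (show (0:ℝ) < u - x - (a-2)*l by nlinarith) (show (0:ℝ) < u - x + (a-2)*l by nlinarith [mul_pos ha2 hl]),
          mul_nonneg hl.le (by linarith : (0:ℝ) ≤ 2*l - x),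
          mul_pos (mul_pos ha1 ha2) (mul_pos hl hl)]
  · rcases lt_or_ge x (a * l) with hx3 | hx3
    · -- 2l < x < al : v = ((a-1)x - al)/(a-2)
      have hveq : v = ((a - 1) * x - a * l) / (a - 2) := hv.2.1 hx2 hx3
      have hvrel : (a - 2) * v = (a - 1) * x - a * l := by
        rw [hveq]; field_simp
      have hvl : l < v := by nlinarith
      have hval : v < a * l := by nlinarith
      have hPv : scadPenalty a l v = (2 * a * l * v - v ^ 2 - l ^ 2) / (2 * (a - 1)) := by
        rw [scad_eval_nonneg a l v (by linarith), if_neg (by linarith), if_pos (by linarith)]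
      rw [hPv]
      split_ifs with h1 h2
      · -- u ≤ l
        rw [← sub_pos]
        have hkey : 1/2*(u-x)^2 + l*u - (1/2*(v-x)^2 + (2*a*l*v - v^2 - l^2)/(2*(a-1)))
            = ((a-1)*(u-x)^2 + 2*(a-1)*l*u - ((a-1)*(v-x)^2 + 2*a*l*v - v^2 - l^2)) / (2*(a-1)) := by
          field_simp; ring
        rw [hkey]
        apply div_pos _ hden
        have hN : (a-1)*(u-x)^2 + 2*(a-1)*l*u - ((a-1)*(v-x)^2 + 2*a*l*v - v^2 - l^2)
            = (a-2)*(u-v)^2 + (u-l)^2 := by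
          linear_combination (2*(u-v)) * hvrel
        rw [hN]
        have h3 : (0:ℝ) < (u - v)^2 := scad_sq_pos (sub_ne_zero.mpr (ne_of_lt (by linarith)))
        nlinarith [sq_nonneg (u - l)]
      · -- l < u ≤ al
        push_neg at h1
        rw [← sub_pos]
        have hkey : 1/2*(u-x)^2 + (2*a*l*u - u^2 - l^2)/(2*(a-1)) - (1/2*(v-x)^2 + (2*a*l*v - v^2 - l^2)/(2*(a-1)))
            = ((a-1)*(u-x)^2 + 2*a*l*u - u^2 - ((a-1)*(v-x)^2 + 2*a*l*v - v^2)) / (2*(a-1)) := by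
          field_simp; ring
        rw [hkey]
        apply div_pos _ hden
        have hN : (a-1)*(u-x)^2 + 2*a*l*u - u^2 - ((a-1)*(v-x)^2 + 2*a*l*v - v^2)
            = (a-2)*(u-v)^2 := by
          linear_combination (2*(u-v)) * hvrel
        rw [hN]
        exact mul_pos ha2 (scad_sq_pos (sub_ne_zero.mpr hne))
      · -- u > al
        push_neg at h1 h2
        rw [← sub_pos]
        have hkey : 1/2*(u-x)^2 + (a+1)*l^2/2 - (1/2*(v-x)^2 + (2*a*l*v - v^2 - l^2)/(2*(a-1)))
            = ((a-1)*(u-x)^2 + (a-1)*(a+1)*l^2 - ((a-1)*(v-x)^2 + 2*a*l*v - v^2 - l^2)) / (2*(a-1)) := by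
          field_simp; ring
        rw [hkey]
        apply div_pos _ hden
        have hN : (a-1)*(u-x)^2 + (a-1)*(a+1)*l^2 - ((a-1)*(v-x)^2 + 2*a*l*v - v^2 - l^2)
            = (a-2)*(u-v)^2 + (u - a*l)^2 := by
          linear_combination (2*(u-v)) * hvrel
        rw [hN]
        have h3 : (0:ℝ) < (u - v)^2 := scad_sq_pos (sub_ne_zero.mpr (ne_of_gt (by linarith)))
        nlinarith [sq_nonneg (u - a*l)]
    · -- x ≥ al : v = x
      have hveq : v = x := hv.2.2 hx3
      subst hveq
      have hPv : scadPenalty a l v = (a + 1) * l ^ 2 / 2 := by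
        rw [scad_eval_nonneg a l v hx]
        rw [if_neg (by nlinarith [mul_pos ha2 hl])]
        rcases eq_or_lt_of_le hx3 with heq | hlt
        · rw [if_pos (le_of_eq heq.symm), ← heq]
          field_simp; ring
        · rw [if_neg (by linarith)]
      rw [hPv]
      split_ifs with h1 h2
      · -- u ≤ l
        nlinarith [mul_nonneg (by linarith : (0:ℝ) ≤ l - u)
            (by nlinarith [mul_pos ha2 hl] : (0:ℝ) ≤ 2*v - u - 3*l),
          mul_self_le_mul_self (by positivity : (0:ℝ) ≤ (a-1)*l) (by linarith : (a-1)*l ≤ v - l),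
          mul_pos (mul_pos ha1 ha2) (mul_pos hl hl)]
      · -- l < u ≤ al
        push_neg at h1
        rw [← sub_pos]
        have hkey : 1/2*(u-v)^2 + (2*a*l*u - u^2 - l^2)/(2*(a-1)) - (1/2*(v-v)^2 + (a+1)*l^2/2)
            = ((a-1)*(u-v)^2 - (u - a*l)^2) / (2*(a-1)) := by
          field_simp; ring
        rw [hkey]
        apply div_pos _ hden
        have h3 : (0:ℝ) < (u - v)^2 := scad_sq_pos (sub_ne_zero.mpr hne)
        have h4 : (a*l - u)^2 ≤ (v - u)^2 := by
          nlinarith [mul_nonneg (by linarith : (0:ℝ) ≤ v - a*l) (by linarith : (0:ℝ) ≤ v + a*l - 2*u)]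
        nlinarith [mul_pos ha2 h3]
      · -- u > al
        push_neg at h1 h2
        have h3 : (0:ℝ) < (u - v)^2 := scad_sq_pos (sub_ne_zero.mpr hne)
        nlinarith

private lemma scad_strict (a l x : ℝ) (ha : 2 < a) (hl : 0 < l) (hx : 0 ≤ x)
    (v : ℝ)
    (hv : (x ≤ 2 * l → v = max (x - l) 0) ∧
          (2 * l < x → x < a * l → v = ((a - 1) * x - a * l) / (a - 2)) ∧
          (a * l ≤ x → v = x)) :
    ∀ u : ℝ, u ≠ v →
      (1 / 2) * (v - x) ^ 2 + scadPenalty a l v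
        < (1 / 2) * (u - x) ^ 2 + scadPenalty a l u := by
  intro u hne
  rcases le_or_gt 0 u with hu | hu
  · exact scad_key a l x ha hl hx v hv u hu hne
  · have hPe : scadPenalty a l (-u) = scadPenalty a l u := by
      simp [scadPenalty, abs_neg]
    by_cases hvu : -u = v
    · have hx0 : 0 < x := by
        rcases eq_or_lt_of_le hx with heq | h
        · exfalso
          have hv0 : v = 0 := by
            rw [hv.1 (by nlinarith), ← heq, max_eq_right (by linarith)]
          rw [hv0] at hvu
          linarith [neg_eq_zero.mp hvu]
        · exact h
      rw [← hvu, ← hPe]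
      nlinarith [mul_pos hx0 (neg_pos.mpr hu)]
    · have h1 := scad_key a l x ha hl hx v hv (-u) (by linarith) hvu
      rw [hPe] at h1
      nlinarith [mul_nonneg hx (le_of_lt (neg_pos.mpr hu))]

/-- The SCAD thresholding function `h_l(x) = argmin_u {½(u-x)² + p_l(u)}` at `x ≥ 0`
is given by: `max(x - l, 0)` for `x ≤ 2l`; `((a-1)x - al)/(a-2)` for `2l < x < al`;
and `x` for `x ≥ al`.  Formally: the stated piecewise value `v` is the unique global
minimizer of `u ↦ ½(u-x)² + p_l(u)`. -/
theorem scad_thresholding_formula (a l x : ℝ) (ha : 2 < a) (hl : 0 < l) (hx : 0 ≤ x)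
    (v : ℝ)
    (hv : (x ≤ 2 * l → v = max (x - l) 0) ∧
          (2 * l < x → x < a * l → v = ((a - 1) * x - a * l) / (a - 2)) ∧
          (a * l ≤ x → v = x)) :
    (∀ u : ℝ, (1 / 2) * (v - x) ^ 2 + scadPenalty a l v
        ≤ (1 / 2) * (u - x) ^ 2 + scadPenalty a l u) ∧
    (∀ u : ℝ, (∀ w : ℝ, (1 / 2) * (u - x) ^ 2 + scadPenalty a l u
        ≤ (1 / 2) * (w - x) ^ 2 + scadPenalty a l w) → u = v) := by
  constructor
  · intro u
    by_cases h : u = v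
    · subst h; exact le_refl _
    · exact le_of_lt (scad_strict a l x ha hl hx v hv u h)
  · intro u hmin
    by_contra h
    have h1 := scad_strict a l x ha hl hx v hv u h
    have h2 := hmin v
    linarith
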